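/- Let k ≥ 2, α ≥ 0, and e, d ∈ ℝ^k. Set Q = (I + α e eᵀ)⁻¹, X = e dᵀ, β = 1 − α‖e‖²/(1 + α‖e‖²), and M' = (I − α Q X)(I − α Q X)ᵀ. Define λ^{im,+}, λ^{im,−} = 1 + (α²β²‖e‖²‖d‖² − 2αβ⟨e,d⟩ ± αβ‖e‖‖d‖·√(α²β²‖e‖²‖d‖² + 4 − 4αβ⟨e,d⟩))/2. Then the characteristic polynomial of M' equals (Y − 1)^{k−2} (Y − λ^{im,+})(Y − λ^{im,−}); in particular M' has k−2 eigenvalues equal to 1 and its remaining two eigenvalues are λ^{im,+} and λ^{im,−}. -/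

import Mathlib

open Matrix Polynomial

/-- The Euclidean norm of a vector in `ℝ^k`, `‖v‖ = √⟨v,v⟩`. -/
noncomputable def enorm {k : ℕ} (v : Fin k → ℝ) : ℝ := Real.sqrt (v ⬝ᵥ v)

/-!
By Sherman–Morrison, `Q X = β e dᵀ`, so with `c = αβ` we get
`M' = (I - c e dᵀ)(I - c d eᵀ) = I + W V`, where `W = [e d]` is `k × 2`. Sylvester's identity
`det(Y - W V) = Y^(k-2) det(Y - V W)` reduces the characteristic polynomial of `M' - I` to that of
the `2 × 2` matrix `V W`, with trace `c²‖e‖²‖d‖² - 2c⟨e,d⟩` and determinant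
`c²(⟨e,d⟩² - ‖e‖²‖d‖²)`; its roots are `λ^{im,±} - 1`. Their discriminant
`c²‖e‖²‖d‖²(c²‖e‖²‖d‖² + 4 - 4c⟨e,d⟩)` is nonnegative by Cauchy–Schwarz.
-/

namespace Matrix

section CommRing

variable {n m R : Type*} [CommRing R]

theorem transpose_of_mul_of_fin_two (u v x y : n → R) :
    (of ![u, v])ᵀ * of ![x, y] = vecMulVec u x + vecMulVec v y := by
  ext i j
  simp [mul_apply, Fin.sum_univ_two, vecMulVec_apply]

variable [Fintype n]

theorem of_mul_transpose_of_fin_two (x y u v : n → R) :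
    of ![x, y] * (of ![u, v])ᵀ = !![x ⬝ᵥ u, x ⬝ᵥ v; y ⬝ᵥ u, y ⬝ᵥ v] := by
  ext i j
  fin_cases i <;> fin_cases j <;> rfl

variable [DecidableEq n] [Fintype m] [DecidableEq m]

theorem charpoly_one_add (N : Matrix n n R) : (1 + N).charpoly = N.charpoly.comp (X - 1) := by
  simpa [add_comm, sub_eq_add_neg] using charpoly_sub_scalar N (-1)

theorem charpoly_one_add_mul_of_le (W : Matrix n m R) (V : Matrix m n R)
    (h : Fintype.card m ≤ Fintype.card n) :
    (1 + W * V).charpoly = (X - 1) ^ (Fintype.card n - Fintype.card m) *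
      (V * W).charpoly.comp (X - 1) := by
  rw [charpoly_one_add, charpoly_mul_comm_of_le W V h, mul_comp, X_pow_comp]

theorem charpoly_fin_two_eq_mul [Nontrivial R] (A : Matrix (Fin 2) (Fin 2) R) {μ₁ μ₂ : R}
    (hsum : μ₁ + μ₂ = A.trace) (hprod : μ₁ * μ₂ = A.det) :
    A.charpoly = (X - C μ₁) * (X - C μ₂) := by
  rw [charpoly_fin_two, ← hsum, ← hprod, C_add, C_mul]
  ring

theorem one_sub_smul_vecMulVec_mul_transpose (c : R) (e d : n → R) :
    (1 - c • vecMulVec e d) * (1 - c • vecMulVec e d)ᵀ =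
      1 + (of ![e, d])ᵀ * of ![(c ^ 2 * (d ⬝ᵥ d)) • e - c • d, -c • e] := by
  rw [transpose_of_mul_of_fin_two, transpose_sub, transpose_one, transpose_smul,
    transpose_vecMulVec]
  simp only [sub_mul, mul_sub, one_mul, mul_one, Matrix.smul_mul, Matrix.mul_smul,
    vecMulVec_mul_vecMulVec, vecMulVec_sub, vecMulVec_smul]
  module

end CommRing

section Field

variable {n K : Type*} [Fintype n] [DecidableEq n] [Field K]

theorem inv_one_add_vecMulVec (u v : n → K) (h : 1 + v ⬝ᵥ u ≠ 0) :
    (1 + vecMulVec u v)⁻¹ = 1 - (1 + v ⬝ᵥ u)⁻¹ • vecMulVec u v := by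
  refine inv_eq_right_inv ?_
  rw [mul_sub, mul_one, add_mul, one_mul, Matrix.mul_smul, vecMulVec_mul_vecMulVec, vecMulVec_smul,
    smul_smul, ← add_smul, ← mul_one_add, inv_mul_cancel₀ h, one_smul, add_sub_cancel_right]

theorem inv_one_add_smul_vecMulVec_self_mul (α : K) (e d : n → K) (h : 1 + α * (e ⬝ᵥ e) ≠ 0) :
    (1 + α • vecMulVec e e)⁻¹ * vecMulVec e d =
      (1 - α * (e ⬝ᵥ e) / (1 + α * (e ⬝ᵥ e))) • vecMulVec e d := by
  rw [← smul_vecMulVec, inv_one_add_vecMulVec _ _ (by rwa [dotProduct_smul, smul_eq_mul]),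
    sub_mul, one_mul, Matrix.smul_mul, vecMulVec_mul_vecMulVec, vecMulVec_smul, smul_vecMulVec,
    dotProduct_smul]
  simp only [smul_smul, smul_eq_mul]
  rw [sub_smul, one_smul, div_eq_inv_mul, mul_comm α]

end Field

end Matrix

section LinearOrder

variable {n R : Type*} [Fintype n] [CommRing R] [LinearOrder R] [IsStrictOrderedRing R]

theorem dotProduct_self_nonneg (v : n → R) : 0 ≤ v ⬝ᵥ v :=
  Finset.sum_nonneg fun i _ => mul_self_nonneg (v i)

theorem four_mul_dotProduct_le (c : R) (u v : n → R) :
    4 * c * (u ⬝ᵥ v) ≤ c ^ 2 * (u ⬝ᵥ u) * (v ⬝ᵥ v) + 4 := by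
  have hcs : (u ⬝ᵥ v) ^ 2 ≤ (u ⬝ᵥ u) * (v ⬝ᵥ v) := by
    simpa only [dotProduct, sq] using Finset.sum_mul_sq_le_sq_mul_sq Finset.univ u v
  nlinarith [sq_nonneg (c * (u ⬝ᵥ v) - 2), mul_le_mul_of_nonneg_left hcs (sq_nonneg c)]

end LinearOrder

theorem enorm_sq {k : ℕ} (v : Fin k → ℝ) : _root_.enorm v ^ 2 = v ⬝ᵥ v :=
  Real.sq_sqrt (dotProduct_self_nonneg v)

theorem charpoly_implicit_td_lambda (k : ℕ) (hk : 2 ≤ k) (α : ℝ) (hα : 0 ≤ α)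
    (e d : Fin k → ℝ)
    (Q Xm M' : Matrix (Fin k) (Fin k) ℝ)
    (hQ : Q = ((1 : Matrix (Fin k) (Fin k) ℝ) + α • Matrix.vecMulVec e e)⁻¹)
    (hX : Xm = Matrix.vecMulVec e d)
    (hM' : M' = (1 - α • (Q * Xm)) * (1 - α • (Q * Xm))ᵀ)
    (β : ℝ) (hβ : β = 1 - α * _root_.enorm e ^ 2 / (1 + α * _root_.enorm e ^ 2))
    (lp lm : ℝ)
    (hlp : lp = 1 + (α ^ 2 * β ^ 2 * _root_.enorm e ^ 2 * _root_.enorm d ^ 2 - 2 * α * β * (e ⬝ᵥ d) +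
        α * β * _root_.enorm e * _root_.enorm d *
          Real.sqrt (α ^ 2 * β ^ 2 * _root_.enorm e ^ 2 * _root_.enorm d ^ 2 + 4 - 4 * α * β * (e ⬝ᵥ d))) / 2)
    (hlm : lm = 1 + (α ^ 2 * β ^ 2 * _root_.enorm e ^ 2 * _root_.enorm d ^ 2 - 2 * α * β * (e ⬝ᵥ d) -
        α * β * _root_.enorm e * _root_.enorm d *
          Real.sqrt (α ^ 2 * β ^ 2 * _root_.enorm e ^ 2 * _root_.enorm d ^ 2 + 4 - 4 * α * β * (e ⬝ᵥ d))) / 2) :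
    M'.charpoly = (X - 1) ^ (k - 2) * ((X - C lp) * (X - C lm)) := by
  have hdisc := Real.sq_sqrt (show 0 ≤ α ^ 2 * β ^ 2 * _root_.enorm e ^ 2 * _root_.enorm d ^ 2 + 4
      - 4 * α * β * (e ⬝ᵥ d) by
    rw [enorm_sq, enorm_sq]; linarith [four_mul_dotProduct_le (α * β) e d])
  have hQX : α • (Q * Xm) = (α * β) • vecMulVec e d := by
    have hden : 1 + α * (e ⬝ᵥ e) ≠ 0 := by nlinarith [dotProduct_self_nonneg e]
    rw [hQ, hX, inv_one_add_smul_vecMulVec_self_mul _ _ _ hden, smul_smul, hβ, enorm_sq]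
  have hcard : Fintype.card (Fin 2) ≤ Fintype.card (Fin k) := by simpa using hk
  rw [hM', hQX, one_sub_smul_vecMulVec_mul_transpose, charpoly_one_add_mul_of_le _ _ hcard,
    of_mul_transpose_of_fin_two, charpoly_fin_two_eq_mul _ (μ₁ := lp - 1) (μ₂ := lm - 1)]
  · simp only [Fintype.card_fin, map_sub, map_one, mul_comp, sub_comp, X_comp, C_comp, one_comp,
      sub_sub_sub_cancel_right]
  · rw [trace_fin_two_of, hlp, hlm]
    simp only [sub_dotProduct, smul_dotProduct, smul_eq_mul, dotProduct_comm d e, ← enorm_sq]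
    ring
  · rw [det_fin_two_of, hlp, hlm]
    simp only [sub_dotProduct, smul_dotProduct, smul_eq_mul, dotProduct_comm d e, ← enorm_sq]
    linear_combination (-(α * β * _root_.enorm e * _root_.enorm d) ^ 2 / 4) * hdisc
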